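/- arXiv:1112.4167 — 6 statements merged into one kernel-verified Lean document; each statement's English description precedes it below -/
import Mathlib

section
/- Let z < 0 be real, A, B ∈ ℂ^{N×N} with B Hermitian positive semidefinite, and v ∈ ℂ^N. Then |tr[((B − zI)⁻¹ − (B + v v^H − zI)⁻¹) A]| ≤ ‖A‖ / |z|, where ‖A‖ is the spectral (operator) norm of A. -/
open Matrix
open scoped Matrix.Norms.L2Operator ComplexOrder

/-!
Write `M = B - zI`, which is positive definite with `M ≥ |z| I`, and let `u = M⁻¹ v`.
By the resolvent identity and Sherman–Morrison, `M⁻¹ - (M + v vᴴ)⁻¹` has trace against `A`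
equal to `uᴴ A u / (1 + uᴴ M u)`. The numerator is at most `‖A‖ ‖u‖²` in modulus, while the
real part of the denominator is at least `1 + |z| ‖u‖²`, so the quotient is at most `‖A‖ / |z|`.
-/

namespace Matrix

variable {n : Type*}

section Field

variable [Fintype n] [DecidableEq n] {K : Type*} [Field K] {M : Matrix n n K} {v w : n → K}

theorem inv_add_vecMulVec_mulVec (hM : IsUnit M) (hMvw : IsUnit (M + vecMulVec v w)) :
    (M + vecMulVec v w)⁻¹ *ᵥ v = (1 + w ⬝ᵥ (M⁻¹ *ᵥ v))⁻¹ • (M⁻¹ *ᵥ v) := by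
  set u := M⁻¹ *ᵥ v
  have hdet := (isUnit_iff_isUnit_det _).mp hMvw
  have hMu : M *ᵥ u = v := by
    rw [mulVec_mulVec, mul_nonsing_inv _ ((isUnit_iff_isUnit_det _).mp hM), one_mulVec]
  have hu : u = (1 + w ⬝ᵥ u) • ((M + vecMulVec v w)⁻¹ *ᵥ v) := by
    have key : (M + vecMulVec v w) *ᵥ u = (1 + w ⬝ᵥ u) • v := by
      rw [add_mulVec, hMu, vecMulVec_mulVec, op_smul_eq_smul, add_smul, one_smul]
    rw [← mulVec_smul, ← key, mulVec_mulVec, nonsing_inv_mul _ hdet, one_mulVec]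
  -- `1 + w ⬝ᵥ u = 0` would force `u = 0`, hence `w ⬝ᵥ u = 0`.
  have hα : 1 + w ⬝ᵥ u ≠ 0 := by
    intro h
    rw [h, zero_smul] at hu
    simp [hu] at h
  calc _ = (1 + w ⬝ᵥ u)⁻¹ • ((1 + w ⬝ᵥ u) • ((M + vecMulVec v w)⁻¹ *ᵥ v)) := by
        rw [smul_smul, inv_mul_cancel₀ hα, one_smul]
    _ = _ := by rw [← hu]

theorem trace_inv_sub_inv_add_vecMulVec_mul (hM : IsUnit M) (hMvw : IsUnit (M + vecMulVec v w))
    (A : Matrix n n K) :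
    ((M⁻¹ - (M + vecMulVec v w)⁻¹) * A).trace =
      (w ᵥ* M⁻¹) ⬝ᵥ (A *ᵥ (M⁻¹ *ᵥ v)) / (1 + w ⬝ᵥ (M⁻¹ *ᵥ v)) := by
  have hres : M⁻¹ - (M + vecMulVec v w)⁻¹ = (M + vecMulVec v w)⁻¹ * vecMulVec v w * M⁻¹ := by
    rw [← neg_sub, inv_sub_inv (iff_of_true hMvw hM), sub_add_cancel_left, mul_neg, neg_mul,
      neg_neg]
  rw [hres, mul_vecMulVec, vecMulVec_mul, vecMulVec_mul, trace_vecMulVec, dotProduct_comm,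
    ← dotProduct_mulVec, inv_add_vecMulVec_mulVec hM hMvw, mulVec_smul, dotProduct_smul,
    smul_eq_mul, div_eq_inv_mul]

theorem IsHermitian.trace_inv_sub_inv_add_vecMulVec_star_mul [StarRing K]
    (hMh : M.IsHermitian) (hM : IsUnit M) (hMv : IsUnit (M + vecMulVec v (star v)))
    (A : Matrix n n K) {u : n → K} (hu : M *ᵥ u = v) :
    ((M⁻¹ - (M + vecMulVec v (star v))⁻¹) * A).trace =
      star u ⬝ᵥ (A *ᵥ u) / (1 + star u ⬝ᵥ (M *ᵥ u)) := by
  have hinv : M⁻¹ *ᵥ v = u := by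
    rw [← hu, mulVec_mulVec, nonsing_inv_mul _ ((isUnit_iff_isUnit_det _).mp hM), one_mulVec]
  have hrow : star v ᵥ* M⁻¹ = star u := by
    rw [← hinv, star_mulVec, hMh.inv.eq]
  have hα : star v ⬝ᵥ u = star u ⬝ᵥ (M *ᵥ u) := by
    rw [← hu, star_mulVec, hMh.eq, dotProduct_mulVec]
  rw [trace_inv_sub_inv_add_vecMulVec_mul hM hMv, hinv, hrow, hα]

end Field

variable {𝕜 : Type*} [RCLike 𝕜]

theorem PosSemidef.posDef_add_smul_one [DecidableEq n] {B : Matrix n n 𝕜} (hB : B.PosSemidef)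
    {c : ℝ} (hc : 0 < c) : (B + c • 1).PosDef :=
  PosDef.posSemidef_add hB (PosDef.one.smul hc)

theorem re_star_dotProduct_self [Fintype n] (u : n → 𝕜) :
    RCLike.re (star u ⬝ᵥ u) = ‖WithLp.toLp 2 u‖ ^ 2 := by
  rw [dotProduct_comm, ← EuclideanSpace.inner_toLp_toLp, inner_self_eq_norm_sq]

variable [Fintype n] [DecidableEq n]

theorem norm_star_dotProduct_mulVec_le (A : Matrix n n 𝕜) (u : n → 𝕜) :
    ‖star u ⬝ᵥ (A *ᵥ u)‖ ≤ ‖A‖ * ‖WithLp.toLp 2 u‖ ^ 2 :=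
  calc ‖star u ⬝ᵥ (A *ᵥ u)‖ = ‖inner 𝕜 (WithLp.toLp 2 u) (WithLp.toLp 2 (A *ᵥ u))‖ := by
        rw [EuclideanSpace.inner_toLp_toLp, dotProduct_comm]
    _ ≤ ‖WithLp.toLp 2 u‖ * ‖WithLp.toLp 2 (A *ᵥ u)‖ := norm_inner_le_norm _ _
    _ ≤ ‖WithLp.toLp 2 u‖ * (‖A‖ * ‖WithLp.toLp 2 u‖) := by
        gcongr; exact A.l2_opNorm_mulVec (WithLp.toLp 2 u)
    _ = ‖A‖ * ‖WithLp.toLp 2 u‖ ^ 2 := by ring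

theorem PosSemidef.one_add_mul_norm_sq_le_norm_one_add {B : Matrix n n 𝕜} (hB : B.PosSemidef)
    (c : ℝ) (u : n → 𝕜) :
    1 + c * ‖WithLp.toLp 2 u‖ ^ 2 ≤ ‖1 + star u ⬝ᵥ ((B + c • 1) *ᵥ u)‖ := by
  have hBu : 0 ≤ RCLike.re (star u ⬝ᵥ (B *ᵥ u)) :=
    RCLike.nonneg_iff.mp (hB.dotProduct_mulVec_nonneg u) |>.1
  calc 1 + c * ‖WithLp.toLp 2 u‖ ^ 2
      ≤ RCLike.re (1 + star u ⬝ᵥ ((B + c • 1) *ᵥ u)) := by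
        rw [add_mulVec, smul_mulVec, one_mulVec, dotProduct_add, dotProduct_smul, map_add,
          map_add, RCLike.smul_re, re_star_dotProduct_self, RCLike.one_re]
        linarith
    _ ≤ _ := RCLike.re_le_norm _

theorem PosSemidef.norm_star_dotProduct_mulVec_div_le {B : Matrix n n 𝕜} (hB : B.PosSemidef)
    {c : ℝ} (hc : 0 < c) (A : Matrix n n 𝕜) (u : n → 𝕜) :
    ‖star u ⬝ᵥ (A *ᵥ u) / (1 + star u ⬝ᵥ ((B + c • 1) *ᵥ u))‖ ≤ ‖A‖ / c := by
  set t := ‖WithLp.toLp 2 u‖ ^ 2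
  rw [norm_div]
  calc _ ≤ ‖A‖ * t / (1 + c * t) :=
        div_le_div₀ (by positivity) (norm_star_dotProduct_mulVec_le A u) (by positivity)
          (hB.one_add_mul_norm_sq_le_norm_one_add c u)
    _ ≤ ‖A‖ / c := by
        rw [div_le_div_iff₀ (by positivity) hc]
        nlinarith [norm_nonneg A]

end Matrix

theorem rank_one_perturbation_lemma
    {N : ℕ} (z : ℝ) (hz : z < 0)
    (A B : Matrix (Fin N) (Fin N) ℂ) (hB : B.PosSemidef)
    (v : Fin N → ℂ) :
    ‖(((B - (z : ℂ) • (1 : Matrix (Fin N) (Fin N) ℂ))⁻¹ -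
        (B + vecMulVec v (star v) - (z : ℂ) • (1 : Matrix (Fin N) (Fin N) ℂ))⁻¹) * A).trace‖
      ≤ ‖A‖ / |z| := by
  have hc : 0 < -z := neg_pos.mpr hz
  have hshift (X : Matrix (Fin N) (Fin N) ℂ) : X - (z : ℂ) • 1 = X + (-z) • 1 := by
    rw [neg_smul, ← sub_eq_add_neg, Complex.coe_smul]
  have hM := hB.posDef_add_smul_one hc
  have hMv := (hB.add (posSemidef_vecMulVec_self_star v)).posDef_add_smul_one hc
  rw [add_right_comm] at hMv
  obtain ⟨u, hu⟩ := mulVec_surjective_iff_isUnit.mpr hM.isUnit v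
  rw [hshift, hshift, add_right_comm B, abs_of_neg hz,
    hM.isHermitian.trace_inv_sub_inv_add_vecMulVec_star_mul hM.isUnit hMv.isUnit A hu]
  exact hB.norm_star_dotProduct_mulVec_div_le hc A u
end

section
/- For x > 0, α > 0, β ≥ 0 and c > 0, the equation e = c(c+e) − (c(c+e)²/(xαβ)) · m((xαβ)/(c + xαβ + e)) — where m is a fixed continuous function satisfying the monotonicity, positivity and scalability properties making the right-hand side a standard interference function of e — has at most one solution e > 0. -/
/-- A standard interference function in the sense of Yates (1995), in one variable:
positivity, strict monotonicity, and scalability on the nonnegative reals. -/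
def IsStandardInterferenceFunction (h : ℝ → ℝ) : Prop :=
  (∀ x, 0 ≤ x → 0 < h x) ∧
  (∀ x x', 0 ≤ x' → x' < x → h x' < h x) ∧
  (∀ α x, 1 < α → 0 ≤ x → h (α * x) < α * h x)

lemma sif_aux (h : ℝ → ℝ) (hstd : IsStandardInterferenceFunction h)
    (x y : ℝ) (hx : 0 ≤ x) (hy : 0 ≤ y)
    (hfx : h x = x) (hfy : h y = y) (hlt : x < y) : False := by
  obtain ⟨hpos, _, hscal⟩ := hstd
  have hx0 : 0 < x := hfx ▸ hpos x hx
  have hα : 1 < y / x := (one_lt_div hx0).mpr hlt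
  have := hscal (y / x) x hα hx
  rw [div_mul_cancel₀ _ (ne_of_gt hx0), hfy, hfx, div_mul_cancel₀ _ (ne_of_gt hx0)] at this
  exact lt_irrefl y this

/-- Any standard interference function has at most one fixed point on ℝ₊. -/
theorem standard_interference_function_at_most_one_fixed_point
    (h : ℝ → ℝ) (hstd : IsStandardInterferenceFunction h)
    (x y : ℝ) (hx : 0 ≤ x) (hy : 0 ≤ y)
    (hfx : h x = x) (hfy : h y = y) : x = y := by
  rcases lt_trichotomy x y with hlt | heq | hgt
  · exact absurd (sif_aux h hstd x y hx hy hfx hfy hlt) not_false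
  · exact heq
  · exact absurd (sif_aux h hstd y x hy hx hfy hfx hgt) not_false
end

section
/- Let h : ℝ₊ → ℝ₊ satisfy: h(x) > 0 for all x ≥ 0; h is strictly increasing; and α·h(x) > h(α·x) for all α > 1 and x ≥ 0 (scalability). If there exists x₀ ≥ 0 with x₀ ≥ h(x₀), then h has a unique fixed point x* > 0, and the iteration x_{t+1} = h(x_t) converges to x* from any initial value x_0 > 0. -/
open Filter Topology

/-- Yates' fixed point theorem for a standard interference function in one variable:
positivity, strict monotonicity and scalability, plus a feasible point, imply the
existence of a unique positive fixed point, and convergence of the fixed-point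
iteration from any positive starting point. -/
theorem yates_fixed_point_theorem
    (h : ℝ → ℝ)
    (hpos : ∀ x, 0 ≤ x → 0 < h x)
    (hmono : ∀ x x', 0 ≤ x' → x' < x → h x' < h x)
    (hscal : ∀ α x, 1 < α → 0 ≤ x → h (α * x) < α * h x)
    (hfeas : ∃ x₀, 0 ≤ x₀ ∧ h x₀ ≤ x₀) :
    ∃ xs : ℝ, (0 < xs ∧ h xs = xs) ∧
      (∀ y, 0 < y → h y = y → y = xs) ∧
      (∀ x₀, 0 < x₀ → Tendsto (fun t => h^[t] x₀) atTop (𝓝 xs)) := by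
  -- weak monotonicity
  have hmono' : ∀ x x' : ℝ, 0 ≤ x' → x' ≤ x → h x' ≤ h x := by
    intro x x' h0 hle
    rcases eq_or_lt_of_le hle with rfl | hlt
    · exact le_rfl
    · exact (hmono x x' h0 hlt).le
  -- scalability in ratio form
  have sc1 : ∀ x y : ℝ, 0 < x → x < y → h y < (y / x) * h x := by
    intro x y hx hxy
    have hα : 1 < y / x := (one_lt_div hx).2 hxy
    have := hscal (y / x) x hα hx.le
    rwa [div_mul_cancel₀ _ hx.ne'] at this
  have sc2 : ∀ x y : ℝ, 0 < y → y < x → (y / x) * h x < h y := by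
    intro x y hy hyx
    have hx : 0 < x := hy.trans hyx
    have hxy := sc1 y x hy hyx
    have hhy : 0 < h y := hpos y hy.le
    calc (y / x) * h x < (y / x) * ((x / y) * h y) := by
          apply mul_lt_mul_of_pos_left hxy (by positivity)
      _ = h y := by field_simp
  -- Lipschitz-type bound (substitute for continuity)
  have lip : ∀ x y : ℝ, 0 < x → 0 < y → |h y - h x| ≤ (h x / x) * |y - x| := by
    intro x y hx hy
    rcases lt_trichotomy y x with hlt | heq | hgt
    · have h1 : h y < h x := hmono x y hy.le hlt
      have h2 : (y / x) * h x < h y := sc2 x y hy hlt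
      rw [abs_of_neg (by linarith), abs_of_neg (by linarith)]
      have hkey : (h x / x) * (x - y) = h x - (y / x) * h x := by field_simp
      linarith
    · simp [heq]
    · have h1 : h x < h y := hmono y x hx.le hgt
      have h2 : h y < (y / x) * h x := sc1 x y hx hgt
      rw [abs_of_pos (by linarith), abs_of_pos (by linarith)]
      have hkey : (h x / x) * (y - x) = (y / x) * h x - h x := by field_simp
      linarith
  -- a positive limit of the iteration is a fixed point
  have fixlim : ∀ (u : ℕ → ℝ) (c L : ℝ), 0 < c → (∀ t, c ≤ u t) →
      (∀ t, u (t + 1) = h (u t)) → Tendsto u atTop (𝓝 L) → h L = L := by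
    intro u c L hc hcu hrec hL
    have hLpos : 0 < L := lt_of_lt_of_le hc (ge_of_tendsto' hL hcu)
    have hd : Tendsto (fun t => dist (u t) L) atTop (𝓝 0) :=
      tendsto_iff_dist_tendsto_zero.1 hL
    have hK : Tendsto (fun t => (h L / L) * dist (u t) L) atTop (𝓝 0) := by
      simpa using hd.const_mul (h L / L)
    have h1 : Tendsto (fun t => h (u t)) atTop (𝓝 (h L)) := by
      rw [tendsto_iff_dist_tendsto_zero]
      refine squeeze_zero (fun t => dist_nonneg) (fun t => ?_) hK
      have := lip L (u t) hLpos (lt_of_lt_of_le hc (hcu t))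
      simpa [Real.dist_eq] using this
    have h2 : Tendsto (fun t => h (u t)) atTop (𝓝 L) := by
      have := hL.comp (tendsto_add_atTop_nat 1)
      simpa [Function.comp_def, hrec] using this
    exact tendsto_nhds_unique h1 h2
  -- uniqueness of positive fixed points
  have uniq : ∀ y z : ℝ, 0 < y → h y = y → 0 < z → h z = z → y = z := by
    have key : ∀ y z : ℝ, 0 < y → h y = y → h z = z → y < z → False := by
      intro y z hy hfy hfz hyz
      have := sc1 y z hy hyz
      rw [hfy, hfz, div_mul_cancel₀ _ hy.ne'] at this
      exact lt_irrefl z this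
    intro y z hy hfy hz hfz
    rcases lt_trichotomy y z with h1 | h1 | h1
    · exact absurd (key y z hy hfy hfz h1) not_false
    · exact h1
    · exact (absurd (key z y hz hfz hfy h1) not_false)
  -- existence of a fixed point, via iteration from the feasible point
  obtain ⟨x₀, hx₀, hfx₀⟩ := hfeas
  set u : ℕ → ℝ := fun t => h^[t] x₀ with hu
  have hrec : ∀ t, u (t + 1) = h (u t) := by
    intro t; simp [hu, Function.iterate_succ_apply']
  have hinv : ∀ t, 0 ≤ u t ∧ h (u t) ≤ u t := by
    intro t
    induction t with
    | zero => exact ⟨hx₀, hfx₀⟩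
    | succ n ih =>
      rw [hrec n]
      refine ⟨(hpos _ ih.1).le, ?_⟩
      exact hmono' _ _ (hpos _ ih.1).le ih.2
  have hanti : Antitone u := by
    apply antitone_nat_of_succ_le
    intro t
    rw [hrec t]; exact (hinv t).2
  have hlb : ∀ t, h 0 ≤ u t := by
    intro t
    cases t with
    | zero =>
      have : h 0 ≤ h x₀ := hmono' _ _ le_rfl hx₀
      exact this.trans hfx₀
    | succ n =>
      rw [hrec n]
      exact hmono' _ _ le_rfl (hinv n).1
  have hbdd : BddBelow (Set.range u) := ⟨h 0, by rintro _ ⟨t, rfl⟩; exact hlb t⟩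
  have h0pos : 0 < h 0 := hpos 0 le_rfl
  have hconv : Tendsto u atTop (𝓝 (⨅ t, u t)) := tendsto_atTop_ciInf hanti hbdd
  set xs : ℝ := ⨅ t, u t with hxs
  have hxspos : 0 < xs := lt_of_lt_of_le h0pos (le_ciInf hlb)
  have hfix : h xs = xs := fixlim u (h 0) xs h0pos hlb hrec hconv
  refine ⟨xs, ⟨hxspos, hfix⟩, fun y hy hfy => uniq y xs hy hfy hxspos hfix, ?_⟩
  -- convergence from any positive starting point
  intro y₀ hy₀
  set v : ℕ → ℝ := fun t => h^[t] y₀ with hv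
  have hvrec : ∀ t, v (t + 1) = h (v t) := by
    intro t; simp [hv, Function.iterate_succ_apply']
  rcases lt_trichotomy y₀ xs with hlt | heq | hgt
  · -- start below xs: increasing iteration
    have hinv2 : ∀ t, y₀ ≤ v t ∧ v t ≤ xs := by
      intro t
      induction t with
      | zero => exact ⟨le_rfl, hlt.le⟩
      | succ n ih =>
        have hvn : 0 < v n := lt_of_lt_of_le hy₀ ih.1
        constructor
        · rcases eq_or_lt_of_le ih.2 with hcase | hcase
          · rw [hvrec n, hcase, hfix]; exact hlt.le
          · -- v n < xs, so v n < h (v n)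
            have := sc2 xs (v n) hvn hcase
            rw [hfix] at this
            have hgt' : v n < h (v n) := by
              have : (v n / xs) * xs < h (v n) := this
              rwa [div_mul_cancel₀ _ hxspos.ne'] at this
            rw [hvrec n]
            exact ih.1.trans hgt'.le
        · rw [hvrec n]
          calc h (v n) ≤ h xs := hmono' _ _ hvn.le ih.2
            _ = xs := hfix
    have hmonov : Monotone v := by
      apply monotone_nat_of_le_succ
      intro t
      rw [hvrec t]
      have hvt : 0 < v t := lt_of_lt_of_le hy₀ (hinv2 t).1
      rcases eq_or_lt_of_le (hinv2 t).2 with hcase | hcase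
      · rw [hcase, hfix]
      · have := sc2 xs (v t) hvt hcase
        rw [hfix, div_mul_cancel₀ _ hxspos.ne'] at this
        exact this.le
    have hbddv : BddAbove (Set.range v) := ⟨xs, by rintro _ ⟨t, rfl⟩; exact (hinv2 t).2⟩
    have hconvv : Tendsto v atTop (𝓝 (⨆ t, v t)) := tendsto_atTop_ciSup hmonov hbddv
    have hLfix : h (⨆ t, v t) = ⨆ t, v t :=
      fixlim v y₀ _ hy₀ (fun t => (hinv2 t).1) hvrec hconvv
    have hLpos : 0 < ⨆ t, v t :=
      lt_of_lt_of_le hy₀ (le_ciSup hbddv 0)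
    rw [uniq _ xs hLpos hLfix hxspos hfix] at hconvv
    exact hconvv
  · -- start at xs: constant sequence
    have : ∀ t, v t = xs := by
      intro t
      simp [hv, heq, Function.iterate_fixed hfix]
    simp only [funext this]; exact tendsto_const_nhds (x := xs) (f := atTop (α := ℕ))
  · -- start above xs: decreasing iteration
    have hinv3 : ∀ t, xs ≤ v t := by
      intro t
      induction t with
      | zero => exact hgt.le
      | succ n ih =>
        rw [hvrec n]
        calc xs = h xs := hfix.symm
          _ ≤ h (v n) := hmono' _ _ hxspos.le ih
    have hantiv : Antitone v := by
      apply antitone_nat_of_succ_le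
      intro t
      rw [hvrec t]
      rcases eq_or_lt_of_le (hinv3 t) with hcase | hcase
      · rw [← hcase, hfix]
      · have := sc1 xs (v t) hxspos hcase
        rw [hfix, div_mul_cancel₀ _ hxspos.ne'] at this
        exact this.le
    have hbddv : BddBelow (Set.range v) := ⟨xs, by rintro _ ⟨t, rfl⟩; exact hinv3 t⟩
    have hconvv : Tendsto v atTop (𝓝 (⨅ t, v t)) := tendsto_atTop_ciInf hantiv hbddv
    have hLfix : h (⨅ t, v t) = ⨅ t, v t :=
      fixlim v xs _ hxspos hinv3 hvrec hconvv
    have hLpos : 0 < ⨅ t, v t := lt_of_lt_of_le hxspos (le_ciInf hinv3)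
    rw [uniq _ xs hLpos hLfix hxspos hfix] at hconvv
    exact hconvv
end

section
/- Let ρ > 0, K ≥ 1, and S, N positive integers. The cubic polynomial p(ḡ) = ḡ³ − ḡ²(2 − S/N − 1/K) + ḡ(1 − S/N − 1/K + (S/(NK))(1 + 1/ρ)) − (S/(NK))(1/ρ) has exactly one root ḡ in the interval [1 − min(1/K, S/N), 1). -/
theorem rayleigh_product_cubic_unique_root
    (ρ K : ℝ) (hρ : 0 < ρ) (hK : 1 ≤ K)
    (S N : ℕ) (hS : 0 < S) (hN : 0 < N) :
    ∃! g : ℝ, g ∈ Set.Ico (1 - min (1 / K) ((S : ℝ) / N)) 1 ∧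
      g ^ 3 - g ^ 2 * (2 - (S : ℝ) / N - 1 / K) +
        g * (1 - (S : ℝ) / N - 1 / K + (S : ℝ) / (N * K) * (1 + 1 / ρ)) -
        (S : ℝ) / (N * K) * (1 / ρ) = 0 := by
  have hK0 : (0:ℝ) < K := lt_of_lt_of_le one_pos hK
  have hNpos : (0:ℝ) < N := by exact_mod_cast hN
  have hSpos : (0:ℝ) < S := by exact_mod_cast hS
  set a : ℝ := (S:ℝ)/N with ha
  set b : ℝ := 1/K with hb
  have hapos : 0 < a := div_pos hSpos hNpos
  have hbpos : 0 < b := div_pos one_pos hK0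
  have hb1 : b ≤ 1 := by rw [hb, div_le_one hK0]; exact hK
  set c : ℝ := a * b / ρ with hc
  have hcpos : 0 < c := div_pos (mul_pos hapos hbpos) hρ
  set m : ℝ := 1 - min b a with hm
  set f : ℝ → ℝ := fun g => g * (g - (1 - a)) * (g - (1 - b)) + c * (g - 1) with hf
  have hpoly : ∀ g : ℝ,
      (g ^ 3 - g ^ 2 * (2 - (S : ℝ) / N - 1 / K) +
        g * (1 - (S : ℝ) / N - 1 / K + (S : ℝ) / (N * K) * (1 + 1 / ρ)) -
        (S : ℝ) / (N * K) * (1 / ρ)) = f g := by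
    intro g
    simp only [hf, hc, ha, hb]
    field_simp
    ring
  have hminb : min b a ≤ b := min_le_left _ _
  have hmina : min b a ≤ a := min_le_right _ _
  have hminpos : 0 < min b a := lt_min hbpos hapos
  have hm0 : 0 ≤ m := by simp only [hm]; linarith
  have hm1 : m < 1 := by simp only [hm]; linarith
  have hma : 1 - a ≤ m := by simp only [hm]; linarith
  have hmb : 1 - b ≤ m := by simp only [hm]; linarith
  -- strict monotonicity on [m, 1]
  have hmono : ∀ x y : ℝ, m ≤ x → x < y → y ≤ 1 → f x < f y := by
    intro x y hx hxy hy
    have h0x : 0 ≤ x := le_trans hm0 hx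
    have hxu : 0 ≤ x - (1 - a) := by linarith
    have hxv : 0 ≤ x - (1 - b) := by linarith
    have h1 : x * (x - (1 - a)) * (x - (1 - b)) ≤ y * (y - (1 - a)) * (y - (1 - b)) := by
      have hylt := hxy.le
      have h0y : 0 ≤ y := le_trans h0x hylt
      have hyu : 0 ≤ y - (1 - a) := by linarith
      have step1 : x * (x - (1 - a)) ≤ y * (y - (1 - a)) :=
        mul_le_mul hylt (by linarith) hxu h0y
      exact mul_le_mul step1 (by linarith) hxv (mul_nonneg h0y hyu)
    have h2 : c * (x - 1) < c * (y - 1) := by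
      have := mul_lt_mul_of_pos_left (show x - 1 < y - 1 by linarith) hcpos
      linarith
    simp only [hf]
    linarith
  have hfm : f m < 0 := by
    have hzero : (m - (1 - a)) * (m - (1 - b)) = 0 := by
      rcases min_cases b a with ⟨h1, _⟩ | ⟨h1, _⟩
      · have : m - (1 - b) = 0 := by simp only [hm, h1]; ring
        rw [this, mul_zero]
      · have : m - (1 - a) = 0 := by simp only [hm, h1]; ring
        rw [this, zero_mul]
    have : f m = c * (m - 1) := by
      simp only [hf]
      have : m * (m - (1 - a)) * (m - (1 - b)) = m * ((m - (1 - a)) * (m - (1 - b))) := by ring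
      rw [this, hzero, mul_zero, zero_add]
    rw [this]
    have : m - 1 < 0 := by linarith
    exact mul_neg_of_pos_of_neg hcpos this
  have hf1 : 0 < f 1 := by
    have : f 1 = a * b := by simp only [hf]; ring
    rw [this]; exact mul_pos hapos hbpos
  -- existence via IVT
  have hcont : ContinuousOn f (Set.Icc m 1) := by
    apply Continuous.continuousOn
    fun_prop
  obtain ⟨g, hg, hfg⟩ := intermediate_value_Ico hm1.le hcont ⟨hfm.le, hf1⟩
  refine ⟨g, ⟨hg, by rw [hpoly g, hfg]⟩, ?_⟩
  rintro g' ⟨hg', hpg'⟩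
  rw [hpoly g'] at hpg'
  by_contra hne
  rcases lt_or_gt_of_ne hne with h | h
  · have := hmono g' g hg'.1 h hg.2.le
    rw [hpg', hfg] at this
    exact lt_irrefl _ this
  · have := hmono g g' hg.1 h hg'.2.le
    rw [hpg', hfg] at this
    exact lt_irrefl _ this
end

section
/- Let ḡ ∈ (max(0, 1 − S/N, 1 − 1/K), 1) with S, N, K, ρ > 0. Define g = (1−ḡ)/ḡ and δ via δ = (1−ḡ)/(ḡ(ḡ + S/N − 1)). Then the three scalar equations ḡ = 1/(1+g), g = (S/N)·δ/(1 + ḡδ), and δ = 1/(K·ḡg/δ + (S/N)/ρ) hold simultaneously if and only if ḡ is a root of ḡ³ − ḡ²(2 − S/N − 1/K) + ḡ(1 − S/N − 1/K + (S/(NK))(1 + 1/ρ)) − (S/(NK))(1/ρ) = 0. -/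
/-!
Put `s = S/N`. With `g = (1-ḡ)/ḡ` the first equation is an identity, and with the given `δ` one
has `1 + ḡδ = s/(ḡ+s-1)` and `g/δ = ḡ+s-1`, so the second equation is an identity too and the
third reduces to `δ · (Kḡ(ḡ+s-1) + s/ρ) = 1`. Clearing the denominator `ḡ(ḡ+s-1)` of `δ` turns
this into `(1-ḡ)(Kḡ(ḡ+s-1) + s/ρ) = ḡ(ḡ+s-1)`, which is `-K` times the cubic.
-/

namespace RayleighProduct

section Field

variable {F : Type*} [Field F] {x s : F}

theorem one_div_one_add_one_sub_div_self (hx : x ≠ 0) : 1 / (1 + (1 - x) / x) = x := by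
  field_simp
  ring

theorem one_add_mul_one_sub_div (hx : x ≠ 0) (hs : x + s - 1 ≠ 0) :
    1 + x * ((1 - x) / (x * (x + s - 1))) = s / (x + s - 1) := by
  field_simp
  ring

theorem one_sub_div_self_eq_mul_div (hx : x ≠ 0) (hs : x + s - 1 ≠ 0) (hs₀ : s ≠ 0) :
    (1 - x) / x = s * ((1 - x) / (x * (x + s - 1))) / (1 + x * ((1 - x) / (x * (x + s - 1)))) := by
  rw [one_add_mul_one_sub_div hx hs]
  field_simp

theorem one_sub_div_self_div_one_sub_div (hx : x ≠ 0) (hx₁ : x ≠ 1) (hs : x + s - 1 ≠ 0) :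
    (1 - x) / x / ((1 - x) / (x * (x + s - 1))) = x + s - 1 := by
  have : 1 - x ≠ 0 := sub_ne_zero.mpr hx₁.symm
  field_simp

theorem one_sub_div_eq_one_div_iff (K t : F) (hx : x ≠ 0) (hx₁ : x ≠ 1) (hs : x + s - 1 ≠ 0) :
    (1 - x) / (x * (x + s - 1)) = 1 / (K * x * ((1 - x) / x) / ((1 - x) / (x * (x + s - 1))) + t) ↔
      (1 - x) * (K * x * (x + s - 1) + t) = x * (x + s - 1) := by
  have hδ : (1 - x) / (x * (x + s - 1)) ≠ 0 :=
    div_ne_zero (sub_ne_zero.mpr hx₁.symm) (mul_ne_zero hx hs)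
  rw [mul_div_assoc, one_sub_div_self_div_one_sub_div hx hx₁ hs, one_div, eq_comm,
    inv_eq_iff_eq_inv, ← mul_eq_one_iff_eq_inv₀ hδ, mul_div_assoc',
    div_eq_one_iff_eq (mul_ne_zero hx hs), mul_comm]

theorem cubic_eq_zero_iff {K : F} (hK : K ≠ 0) (ρ : F) :
    x ^ 3 - x ^ 2 * (2 - s - 1 / K) + x * (1 - s - 1 / K + s / K * (1 + 1 / ρ)) -
        s / K * (1 / ρ) = 0 ↔
      (1 - x) * (K * x * (x + s - 1) + s / ρ) = x * (x + s - 1) := by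
  have hcubic : x ^ 3 - x ^ 2 * (2 - s - 1 / K) + x * (1 - s - 1 / K + s / K * (1 + 1 / ρ)) -
      s / K * (1 / ρ) = -(1 / K) * ((1 - x) * (K * x * (x + s - 1) + s / ρ) - x * (x + s - 1)) := by
    field_simp
    ring
  rw [hcubic, mul_eq_zero, sub_eq_zero, or_iff_right (by simpa using hK)]

end Field

end RayleighProduct

open RayleighProduct in
theorem rayleigh_product_fundamental_equations_iff_cubic_general
    (S N K ρ : ℝ)
    (gbar : ℝ) (hgbar : gbar ∈ Set.Ioo (max 0 (max (1 - S / N) (1 - 1 / K))) 1) :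
    let g := (1 - gbar) / gbar
    let δ := (1 - gbar) / (gbar * (gbar + S / N - 1))
    (gbar = 1 / (1 + g) ∧ g = (S / N) * δ / (1 + gbar * δ) ∧
        δ = 1 / (K * gbar * g / δ + (S / N) / ρ)) ↔
      gbar ^ 3 - gbar ^ 2 * (2 - S / N - 1 / K) +
        gbar * (1 - S / N - 1 / K + S / (N * K) * (1 + 1 / ρ)) -
        S / (N * K) * (1 / ρ) = 0 := by
  intro g δ
  obtain ⟨hlo, hx₁⟩ := hgbar
  simp only [max_lt_iff] at hlo
  obtain ⟨hx₀, hs, hK⟩ := hlo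
  have hK₀ : K ≠ 0 := (one_div_pos.mp (by linarith)).ne'
  have hs' : gbar + S / N - 1 ≠ 0 := by linarith
  rw [← div_div, cubic_eq_zero_iff hK₀,
    ← one_sub_div_eq_one_div_iff K _ hx₀.ne' hx₁.ne hs']
  exact ⟨fun h => h.2.2, fun h => ⟨(one_div_one_add_one_sub_div_self hx₀.ne').symm,
    one_sub_div_self_eq_mul_div hx₀.ne' hs' (by linarith), h⟩⟩

theorem rayleigh_product_fundamental_equations_iff_cubic
    (S N K ρ : ℝ) (hS : 0 < S) (hN : 0 < N) (hK : 0 < K) (hρ : 0 < ρ)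
    (gbar : ℝ) (hgbar : gbar ∈ Set.Ioo (max 0 (max (1 - S / N) (1 - 1 / K))) 1) :
    let g := (1 - gbar) / gbar
    let δ := (1 - gbar) / (gbar * (gbar + S / N - 1))
    (gbar = 1 / (1 + g) ∧ g = (S / N) * δ / (1 + gbar * δ) ∧
        δ = 1 / (K * gbar * g / δ + (S / N) / ρ)) ↔
      gbar ^ 3 - gbar ^ 2 * (2 - S / N - 1 / K) +
        gbar * (1 - S / N - 1 / K + S / (N * K) * (1 + 1 / ρ)) -
        S / (N * K) * (1 / ρ) = 0 :=
  rayleigh_product_fundamental_equations_iff_cubic_general S N K ρ gbar hgbar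
end

section
/- Let A ∈ ℂ^{n×n} be Hermitian positive semidefinite and B ∈ ℂ^{n×n} Hermitian. Then tr[(A·B)²] ≥ 0. Moreover, if A is positive definite and B ≠ 0, then tr[(A·B)²] > 0. -/
/-!
Write `A = Sᴴ S`. Cycling the trace turns `tr((AB)²)` into `tr(M²)` with `M = S B Sᴴ` Hermitian,
and `tr(M²) = tr(Mᴴ M) = ∑ |Mᵢⱼ|² ≥ 0`, with equality only for `M = 0`. When `A` is invertible,
`M = 0` forces `A B A = Sᴴ M S = 0`, hence `B = 0`.
-/

open Matrix
open scoped ComplexOrder MatrixOrder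

namespace Matrix

variable {m n R : Type*} [Fintype m] [Fintype n] [DecidableEq m] [DecidableEq n]

lemma trace_conjTranspose_mul_self_mul_sq [CommSemiring R] [Star R]
    (S : Matrix m n R) (B : Matrix n n R) :
    ((Sᴴ * S * B) ^ 2).trace = ((S * B * Sᴴ) ^ 2).trace := by
  simp only [sq, Matrix.mul_assoc]
  rw [trace_mul_comm Sᴴ]
  simp only [Matrix.mul_assoc]

variable [CommRing R] [PartialOrder R] [StarRing R] [StarOrderedRing R] {M : Matrix n n R}

lemma IsHermitian.trace_sq_nonneg (hM : M.IsHermitian) : 0 ≤ (M ^ 2).trace := by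
  rw [sq]
  nth_rw 1 [← hM.eq]
  exact (posSemidef_conjTranspose_mul_self M).trace_nonneg

lemma IsHermitian.trace_sq_pos [NoZeroDivisors R] (hM : M.IsHermitian) (h : M ≠ 0) :
    0 < (M ^ 2).trace := by
  refine hM.trace_sq_nonneg.lt_of_ne' ?_
  rw [sq]
  nth_rw 1 [← hM.eq]
  exact trace_conjTranspose_mul_self_eq_zero_iff.not.mpr h

end Matrix

theorem trace_sq_product_nonneg
    {n : ℕ} (A B : Matrix (Fin n) (Fin n) ℂ)
    (hA : A.PosSemidef) (hB : B.IsHermitian) :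
    0 ≤ (((A * B) ^ 2).trace).re ∧
      (A.PosDef → B ≠ 0 → 0 < (((A * B) ^ 2).trace).re) := by
  obtain ⟨S, rfl⟩ := CStarAlgebra.nonneg_iff_eq_star_mul_self.mp hA.nonneg
  rw [star_eq_conjTranspose, trace_conjTranspose_mul_self_mul_sq]
  have hM : (S * B * Sᴴ).IsHermitian := isHermitian_mul_mul_conjTranspose S hB
  refine ⟨(Complex.nonneg_iff.mp hM.trace_sq_nonneg).1, fun hA_posDef hB_ne => ?_⟩
  refine (Complex.pos_iff.mp (hM.trace_sq_pos fun hM_zero => hB_ne ?_)).1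
  have hABA : Sᴴ * S * B * (Sᴴ * S) = 0 := by
    simpa [Matrix.mul_assoc] using congr(Sᴴ * $hM_zero * S)
  simpa [hA_posDef.isUnit.mul_right_eq_zero, hA_posDef.isUnit.mul_left_eq_zero] using hABA
end
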